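/- Let v = colour(u, y, y′) where u is a Sturmian sequence over {a, b} and y, y′ are constant gap sequences over disjoint alphabets, and let w be a factor of u. Then for any i, j ∈ ℕ, the word obtained by colouring w with the shifted sequences σ^i(y) and σ^j(y′) is a factor of v. In particular, if a Sturmian sequence ũ has the same language as u, then E(colour(ũ, y, y′)) = E(v) and E*(colour(ũ, y, y′)) = E*(v). -/

import Mathlib

open Filter Topology Matrix
open scoped ENNReal

namespace Paper

variable {A : Type*}

/-- The factor of `u` of length `len` starting at position `i`. -/
def factorAt (u : ℕ → A) (i len : ℕ) : List A :=
  (List.range len).map fun k => u (i + k)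

/-- The word `w` occurs in `u` at position `i`. -/
def OccursAt (u : ℕ → A) (w : List A) (i : ℕ) : Prop :=
  w = factorAt u i w.length

/-- `w` is a factor of the sequence `u`. -/
def IsFactor (u : ℕ → A) (w : List A) : Prop :=
  ∃ i, OccursAt u w i

/-- `u` is recurrent: every factor occurs infinitely often. -/
def Recurrent (u : ℕ → A) : Prop :=
  ∀ w, IsFactor u w → ∀ N, ∃ i, N ≤ i ∧ OccursAt u w i

/-- `u` is uniformly recurrent: every factor occurs in every window of some fixed length. -/
def UniformlyRecurrent (u : ℕ → A) : Prop :=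
  ∀ w, IsFactor u w → ∃ R, ∀ i, ∃ j, i ≤ j ∧ j < i + R ∧ OccursAt u w j

/-- `u` is eventually periodic. -/
def EventuallyPeriodic (u : ℕ → A) : Prop :=
  ∃ p, 0 < p ∧ ∃ N, ∀ n, N ≤ n → u (n + p) = u n

/-- `u` is balanced: counts of each letter in equal-length factors differ by at most 1. -/
def IsBalanced [DecidableEq A] (u : ℕ → A) : Prop :=
  ∀ (c : A) (w w' : List A), IsFactor u w → IsFactor u w' → w.length = w'.length →
    (w.count c : ℤ) - (w'.count c : ℤ) ≤ 1

/-- `w^{n/|w|}`, i.e. the prefix of length `n` of `w^ω`, is a factor of `u`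
(for a nonempty word `w`). -/
def HasPowerFactor (u : ℕ → A) (w : List A) (n : ℕ) : Prop :=
  w ≠ [] ∧ ∃ i, ∀ k, k < n → u (i + k) = w.getD (k % w.length) (u i)

/-- The critical exponent `E(u)`. -/
noncomputable def critExp (u : ℕ → A) : ℝ≥0∞ :=
  sSup {e | ∃ w n, HasPowerFactor u w n ∧ e = (n : ℝ≥0∞) / (w.length : ℝ≥0∞)}

/-- The maximal exponent of a repetition whose root has length `l`. -/
noncomputable def maxExpLen (u : ℕ → A) (l : ℕ) : ℝ≥0∞ :=
  sSup {e | ∃ w n, (w : List A).length = l ∧ HasPowerFactor u w n ∧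
    e = (n : ℝ≥0∞) / (l : ℝ≥0∞)}

/-- The asymptotic critical exponent `E*(u)`. -/
noncomputable def acritExp (u : ℕ → A) : ℝ≥0∞ :=
  if critExp u = ⊤ then ⊤ else Filter.limsup (fun l => maxExpLen u l) Filter.atTop

/-- `w` is a right special factor of `u`. -/
def RightSpecial (u : ℕ → A) (w : List A) : Prop :=
  ∃ c c' : A, c ≠ c' ∧ IsFactor u (w ++ [c]) ∧ IsFactor u (w ++ [c'])

/-- `w` is a left special factor of `u`. -/
def LeftSpecial (u : ℕ → A) (w : List A) : Prop :=
  ∃ c c' : A, c ≠ c' ∧ IsFactor u (c :: w) ∧ IsFactor u (c' :: w)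

/-- `w` is a bispecial factor of `u`. -/
def Bispecial (u : ℕ → A) (w : List A) : Prop := LeftSpecial u w ∧ RightSpecial u w

/-- `r` is a return word to `w` in `u`: the word between two consecutive occurrences of `w`. -/
def IsReturnWord (u : ℕ → A) (w r : List A) : Prop :=
  ∃ i j, i < j ∧ OccursAt u w i ∧ OccursAt u w j ∧
    (∀ t, i < t → t < j → ¬ OccursAt u w t) ∧ r = factorAt u i (j - i)

/-- A Sturmian sequence: an aperiodic balanced sequence over the binary
alphabet `Bool` (`false` = letter a, `true` = letter b). -/
def IsSturmian (u : ℕ → Bool) : Prop :=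
  ¬ EventuallyPeriodic u ∧ IsBalanced u

/-- Prepend a letter to a sequence. -/
def prepend (c : A) (u : ℕ → A) : ℕ → A
  | 0 => c
  | n + 1 => u n

/-- A standard Sturmian sequence: `u`, `a·u` and `b·u` are all Sturmian. -/
def IsStandard (u : ℕ → Bool) : Prop :=
  IsSturmian u ∧ IsSturmian (prepend false u) ∧ IsSturmian (prepend true u)

/-- The letter `c` has frequency `ρ` in `u`. -/
def HasFreq [DecidableEq A] (u : ℕ → A) (c : A) (ρ : ℝ) : Prop :=
  Tendsto (fun n => ((factorAt u 0 n).count c : ℝ) / n) atTop (𝓝 ρ)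

/-- `u` has slope `θ = ρ_a(u)/ρ_b(u)`, with `b = true` the most frequent letter. -/
def HasSlope (u : ℕ → Bool) (θ : ℝ) : Prop :=
  ∃ ρa ρb : ℝ, HasFreq u false ρa ∧ HasFreq u true ρb ∧ ρa < ρb ∧ θ = ρa / ρb

/-- `cfP a N` is the numerator `p_{N-1}` of the convergents of the continued
fraction `[0; a 1, a 2, …]` (index shifted by one: `cfP a 0 = p_{-1} = 1`). -/
def cfP (a : ℕ → ℕ) : ℕ → ℕ
  | 0 => 1
  | 1 => 0
  | n + 2 => a (n + 1) * cfP a (n + 1) + cfP a n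

/-- `cfQ a N` is the denominator `q_{N-1}` of the convergents of the continued
fraction `[0; a 1, a 2, …]` (index shifted by one: `cfQ a 0 = q_{-1} = 0`). -/
def cfQ (a : ℕ → ℕ) : ℕ → ℕ
  | 0 => 0
  | 1 => 1
  | n + 2 => a (n + 1) * cfQ a (n + 1) + cfQ a n

/-- The value of the continued fraction `[0; a 1, a 2, …]`, as the limit of its
convergents `p_N / q_N`. -/
noncomputable def cfValue (a : ℕ → ℕ) : ℝ :=
  limUnder atTop fun N => (cfP a (N + 1) : ℝ) / (cfQ a (N + 1) : ℝ)

/-- `δ_N = [a_{N+1}; a_{N+2}, …]`, the inverse of the value of the shifted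
continued fraction `[0; a_{N+1}, a_{N+2}, …]`. -/
noncomputable def cfDelta (a : ℕ → ℕ) (N : ℕ) : ℝ :=
  (cfValue fun n => a (n + N))⁻¹

/-- `Q_{N-1} = p_{N-1} + q_{N-1}` (shifted index as in `cfP`, `cfQ`). -/
def cfQpair (a : ℕ → ℕ) (N : ℕ) : ℕ := cfP a N + cfQ a N

/-- The matrix `A_N` with rows `(p_{N-1}, p_N)` and `(q_{N-1}, q_N)`. -/
def cfMat (a : ℕ → ℕ) (N : ℕ) : Matrix (Fin 2) (Fin 2) ℤ :=
  !![(cfP a N : ℤ), (cfP a (N + 1) : ℤ); (cfQ a N : ℤ), (cfQ a (N + 1) : ℤ)]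

/-- The colouring of a binary sequence `u` by `y` (on the letter `a = false`) and
`y'` (on the letter `b = true`). -/
def colour (u : ℕ → Bool) (y y' : ℕ → A) (n : ℕ) : A :=
  if u n then y' ((List.range n).countP fun k => u k)
  else y ((List.range n).countP fun k => !u k)

/-- Colouring of a finite binary word by the sequences `y` and `y'`. -/
def colourWord : (ℕ → A) → (ℕ → A) → List Bool → List A
  | _, _, [] => []
  | y, y', c :: w =>
      if c then y' 0 :: colourWord y (fun n => y' (n + 1)) w
      else y 0 :: colourWord (fun n => y (n + 1)) y' w

/-- A constant gap sequence: every occurring letter occurs with a constant gap. -/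
def IsConstantGap (y : ℕ → A) : Prop :=
  ∀ c : A, (∃ n, y n = c) →
    ∃ g, 0 < g ∧ ∀ n, y n = c →
      y (n + g) = c ∧ ∀ t, 0 < t → t < g → y (n + t) ≠ c

/-- The minimal period of a sequence. -/
noncomputable def minPeriod (y : ℕ → A) : ℕ :=
  sInf {p | 0 < p ∧ ∀ n, y (n + p) = y n}

/-- `d` is a derived sequence of `u` to the factor `z`: coding (by a binary
alphabet, via an injective labelling `f` of return words) of the decomposition
of `u` into return words to `z`. -/
def IsDerivedSeq (u : ℕ → Bool) (z : List Bool) (d : ℕ → Bool) : Prop :=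
  ∃ (occ : ℕ → ℕ) (f : Bool → List Bool),
    StrictMono occ ∧ (∀ n, OccursAt u z (occ n)) ∧
    (∀ i, OccursAt u z i → ∃ n, occ n = i) ∧
    f true ≠ f false ∧
    ∀ n, factorAt u (occ n) (occ (n + 1) - occ n) = f (d n)

/-- The equivalence of unimodular matrices: `M ≡ M'` iff `diag(c,c')·M ≡ M'`
with the first row mod `Y` and the second row mod `Y'`, for some `c` coprime
with `Y` and `c'` coprime with `Y'`. -/
def MatEquiv (Y Y' : ℕ) (M M' : Matrix (Fin 2) (Fin 2) ℤ) : Prop :=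
  ∃ c c' : ℤ, IsCoprime c (Y : ℤ) ∧ IsCoprime c' (Y' : ℤ) ∧
    (∀ j, (Y : ℤ) ∣ (c * M 0 j - M' 0 j)) ∧
    (∀ j, (Y' : ℤ) ∣ (c' * M 1 j - M' 1 j))

/-- `δ > 1` is `(1+β)`-forcing for (the class of) the matrix `M`, with respect to
the periods `P`, `P'`. -/
def IsForcing (β : ℝ) (P P' : ℕ) (M : Matrix (Fin 2) (Fin 2) ℤ) (δ : ℝ) : Prop :=
  1 < δ ∧ ∃ m k l : ℕ, 0 < k + l ∧
    -- (P1)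
    ((P : ℤ) ∣ (M 0 0 * (l : ℤ) + M 0 1 * ((m : ℤ) * l + k)) ∧
     (P' : ℤ) ∣ (M 1 0 * (l : ℤ) + M 1 1 * ((m : ℤ) * l + k))) ∧
    -- (P2)
    ((m : ℝ) + 1 < δ ∧ |(l : ℝ) * (δ - m) - k| < δ - m + 1) ∧
    -- (P3)
    ((k = l → β < 1 / (k : ℝ)) ∧
     (l < k → β ≤ (1 + (m : ℝ)) / ((k : ℝ) + m * l)) ∧
     (k < l → β ≤ (2 + (m : ℝ)) / ((k : ℝ) + (m + 1) * l)))

/-- The set `F(β, M)` of `(1+β)`-forcing `δ`'s. -/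
def ForcingSet (β : ℝ) (P P' : ℕ) (M : Matrix (Fin 2) (Fin 2) ℤ) : Set ℝ :=
  {δ | IsForcing β P P' M δ}

/-- The set `D(β, M) = {δ > 1 : δ is not in the closure of F(β, M)}`. -/
def DSet (β : ℝ) (P P' : ℕ) (M : Matrix (Fin 2) (Fin 2) ℤ) : Set ℝ :=
  {δ | 1 < δ ∧ δ ∉ closure (ForcingSet β P P' M)}

/-- The finite Fibonacci words: fixed-point prefixes of `b ↦ ba`, `a ↦ b`,
where `b = true`, `a = false`. -/
def fibList : ℕ → List Bool
  | 0 => [true]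
  | 1 => [true, false]
  | n + 2 => fibList (n + 1) ++ fibList n

/-- The Fibonacci sequence, the fixed point of `b ↦ ba`, `a ↦ b`. -/
def fibWord (n : ℕ) : Bool := (fibList (n + 2)).getD n true

end Paper

/-!
A Sturmian sequence `u` codes an irrational rotation. If `α` is the frequency of `b`, balance
gives `|#b(window of length n) - n α| ≤ 1`, so `phase u m = #b(u[0,m)) - m α - c`, with `c`
the infimum of `#b(u[0,m)) - m α`, stays in `[0, 1]`, moves by `u m - α` at each step and
determines the letter `u m` by its position relative to `α`; `α` is irrational because `u` is
aperiodic. Shifting all phases by the same small amount, in a suitable direction, preserves the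
letters, so every factor `w` occurs at all positions whose phase lies in some open interval.
For `t = i + j + Q s`, asking that `phase u t` lie in that interval and that
`#b(u[0,t)) ≡ j (mod Q)` (hence `#a(u[0,t)) ≡ i`) is a condition on `-s α` modulo `1`, which
the irrational rotation meets for arbitrarily large `s`. Taking for `Q` a common period of `y`
and `y'` on the relevant window, the colouring of `u` read at such a `t` is the colouring of `w`
by `σ^i y` and `σ^j y'`. So the language of `colour(u, y, y')` only depends on that of `u`, and
so do the critical exponents.
-/

namespace Paper

section Words

variable {A : Type*}

@[simp] lemma length_factorAt (u : ℕ → A) (i n : ℕ) : (factorAt u i n).length = n := by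
  simp [factorAt]

lemma factorAt_add (u : ℕ → A) (i m n : ℕ) :
    factorAt u i (m + n) = factorAt u i m ++ factorAt u (i + m) n := by
  simp [factorAt, List.range_add, Function.comp_def, Nat.add_assoc]

lemma factorAt_succ (u : ℕ → A) (i n : ℕ) :
    factorAt u i (n + 1) = u i :: factorAt u (i + 1) n := by
  simp [factorAt, List.range_succ_eq_map, Function.comp_def, Nat.add_assoc, Nat.add_comm 1]

lemma occursAt_factorAt (u : ℕ → A) (i n : ℕ) : OccursAt u (factorAt u i n) i := by
  simp [OccursAt]

lemma occursAt_iff {u : ℕ → A} {w : List A} {i : ℕ} :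
    OccursAt u w i ↔ ∀ k (hk : k < w.length), w[k] = u (i + k) := by
  simp [OccursAt, List.ext_get_iff, factorAt]

end Words

section Counting

variable (u : ℕ → Bool)

def windowCount (m n : ℕ) : ℕ := (factorAt u m n).count true

lemma windowCount_add (m a b : ℕ) :
    windowCount u m (a + b) = windowCount u m a + windowCount u (m + a) b := by
  simp [windowCount, factorAt_add]

lemma windowCount_one (m : ℕ) : windowCount u m 1 = (u m).toNat := by
  cases h : u m <;> simp [windowCount, factorAt, h]

lemma windowCount_le (m n : ℕ) : windowCount u m n ≤ n := by
  simpa [windowCount] using List.count_le_length (l := factorAt u m n) (a := true)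

def bCount (t : ℕ) : ℕ := (List.range t).countP fun k => u k

def aCount (t : ℕ) : ℕ := (List.range t).countP fun k => !u k

lemma bCount_succ (t : ℕ) : bCount u (t + 1) = bCount u t + (u t).toNat := by
  cases h : u t <;> simp [bCount, List.range_succ, h]

lemma aCount_succ (t : ℕ) : aCount u (t + 1) = aCount u t + (!u t).toNat := by
  cases h : u t <;> simp [aCount, List.range_succ, h]

lemma bCount_eq_windowCount (t : ℕ) : bCount u t = windowCount u 0 t := by
  induction t with
  | zero => simp [bCount, windowCount, factorAt]
  | succ t ih => rw [bCount_succ, windowCount_add, windowCount_one, ih, Nat.zero_add]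

lemma aCount_add_bCount (t : ℕ) : aCount u t + bCount u t = t := by
  induction t with
  | zero => simp [aCount, bCount]
  | succ t ih => cases h : u t <;> simp [aCount_succ, bCount_succ, h] <;> omega

end Counting

section Balanced

variable {u : ℕ → Bool}

noncomputable def minWindowCount (u : ℕ → Bool) (n : ℕ) : ℕ :=
  sInf (Set.range fun m => windowCount u m n)

lemma minWindowCount_le (u : ℕ → Bool) (m n : ℕ) : minWindowCount u n ≤ windowCount u m n :=
  Nat.sInf_le ⟨m, rfl⟩

lemma minWindowCount_le_self (u : ℕ → Bool) (n : ℕ) : minWindowCount u n ≤ n :=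
  (minWindowCount_le u 0 n).trans (windowCount_le u 0 n)

lemma exists_windowCount_eq_minWindowCount (u : ℕ → Bool) (n : ℕ) :
    ∃ m, windowCount u m n = minWindowCount u n :=
  Nat.sInf_mem (Set.range_nonempty _)

lemma minWindowCount_add_minWindowCount_le (u : ℕ → Bool) (a b : ℕ) :
    minWindowCount u a + minWindowCount u b ≤ minWindowCount u (a + b) := by
  obtain ⟨m, hm⟩ := exists_windowCount_eq_minWindowCount u (a + b)
  rw [← hm, windowCount_add]
  exact Nat.add_le_add (minWindowCount_le u _ _) (minWindowCount_le u _ _)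

lemma IsBalanced.windowCount_le_minWindowCount_add_one (hb : IsBalanced u) (m n : ℕ) :
    windowCount u m n ≤ minWindowCount u n + 1 := by
  obtain ⟨m₀, hm₀⟩ := exists_windowCount_eq_minWindowCount u n
  have : (windowCount u m n : ℤ) - windowCount u m₀ n ≤ 1 :=
    hb true _ _ ⟨m, occursAt_factorAt u m n⟩ ⟨m₀, occursAt_factorAt u m₀ n⟩ (by simp)
  omega

lemma IsBalanced.minWindowCount_add_le (hb : IsBalanced u) (a b : ℕ) :
    minWindowCount u (a + b) ≤ minWindowCount u a + minWindowCount u b + 1 := by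
  obtain ⟨m, hm⟩ := exists_windowCount_eq_minWindowCount u a
  calc minWindowCount u (a + b) ≤ windowCount u m (a + b) := minWindowCount_le u _ _
    _ = windowCount u m a + windowCount u (m + a) b := windowCount_add u m a b
    _ ≤ minWindowCount u a + minWindowCount u b + 1 := by
      have := hb.windowCount_le_minWindowCount_add_one (m + a) b
      omega

lemma IsBalanced.mul_minWindowCount_le (hb : IsBalanced u) (a b : ℕ) :
    a * minWindowCount u b ≤ b * minWindowCount u a + b := by
  have superadd (k : ℕ) : k * minWindowCount u b ≤ minWindowCount u (k * b) := by
    induction k with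
    | zero => simp
    | succ k ih =>
      have := minWindowCount_add_minWindowCount_le u (k * b) b
      rw [Nat.succ_mul, Nat.succ_mul]
      omega
  have subadd (k : ℕ) : minWindowCount u (k * a) ≤ k * minWindowCount u a + k := by
    induction k with
    | zero => simpa using minWindowCount_le_self u 0
    | succ k ih =>
      have := hb.minWindowCount_add_le (k * a) a
      rw [Nat.succ_mul, Nat.succ_mul]
      omega
  calc a * minWindowCount u b ≤ minWindowCount u (a * b) := superadd a
    _ = minWindowCount u (b * a) := by rw [Nat.mul_comm]
    _ ≤ b * minWindowCount u a + b := subadd b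

end Balanced

section Slope

variable {u : ℕ → Bool}

noncomputable def bFrequency (u : ℕ → Bool) : ℝ := ⨆ n : ℕ, (minWindowCount u n : ℝ) / n

lemma bddAbove_minWindowCount_div (u : ℕ → Bool) :
    BddAbove (Set.range fun n : ℕ => (minWindowCount u n : ℝ) / n) := by
  refine ⟨1, ?_⟩
  rintro _ ⟨n, rfl⟩
  exact div_le_one_of_le₀ (by exact_mod_cast minWindowCount_le_self u n) n.cast_nonneg

lemma minWindowCount_le_mul_bFrequency (u : ℕ → Bool) (n : ℕ) :
    (minWindowCount u n : ℝ) ≤ n * bFrequency u := by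
  rcases n.eq_zero_or_pos with rfl | hn
  · simpa using minWindowCount_le_self u 0
  rw [← div_le_iff₀' (by positivity)]
  exact le_ciSup (bddAbove_minWindowCount_div u) n

lemma IsBalanced.mul_bFrequency_le (hb : IsBalanced u) (n : ℕ) :
    n * bFrequency u ≤ minWindowCount u n + 1 := by
  rcases n.eq_zero_or_pos with rfl | hn
  · simp only [CharP.cast_eq_zero, zero_mul]; positivity
  rw [← le_div_iff₀' (by positivity)]
  refine ciSup_le fun m => ?_
  rcases m.eq_zero_or_pos with rfl | hm
  · simp only [CharP.cast_eq_zero, div_zero]; positivity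
  rw [div_le_div_iff₀ (by positivity) (by positivity)]
  have := hb.mul_minWindowCount_le n m
  exact_mod_cast (by linarith : minWindowCount u m * n ≤ (minWindowCount u n + 1) * m)

lemma bFrequency_nonneg (u : ℕ → Bool) : 0 ≤ bFrequency u :=
  Real.iSup_nonneg fun n => by positivity

lemma bFrequency_le_one (u : ℕ → Bool) : bFrequency u ≤ 1 :=
  ciSup_le fun n => div_le_one_of_le₀ (by exact_mod_cast minWindowCount_le_self u n) n.cast_nonneg

lemma IsBalanced.abs_windowCount_sub_le (hb : IsBalanced u) (m n : ℕ) :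
    |(windowCount u m n : ℝ) - n * bFrequency u| ≤ 1 := by
  have h₁ : (minWindowCount u n : ℝ) ≤ windowCount u m n := by
    exact_mod_cast minWindowCount_le u m n
  have h₂ : (windowCount u m n : ℝ) ≤ minWindowCount u n + 1 := by
    exact_mod_cast hb.windowCount_le_minWindowCount_add_one m n
  rw [abs_le]
  constructor <;> linarith [minWindowCount_le_mul_bFrequency u n, hb.mul_bFrequency_le n]

noncomputable def discrepancy (u : ℕ → Bool) (m : ℕ) : ℝ := bCount u m - m * bFrequency u

@[simp] lemma discrepancy_zero (u : ℕ → Bool) : discrepancy u 0 = 0 := by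
  simp [discrepancy, bCount]

lemma discrepancy_add (u : ℕ → Bool) (m n : ℕ) :
    discrepancy u (m + n) = discrepancy u m + (windowCount u m n - n * bFrequency u) := by
  have := windowCount_add u 0 m n
  rw [Nat.zero_add] at this
  simp only [discrepancy, bCount_eq_windowCount, this]
  push_cast
  ring

lemma IsBalanced.abs_discrepancy_sub_le (hb : IsBalanced u) (a b : ℕ) :
    |discrepancy u a - discrepancy u b| ≤ 1 := by
  wlog hab : b ≤ a generalizing a b
  · rw [abs_sub_comm]; exact this b a (by omega)
  obtain ⟨n, rfl⟩ := Nat.exists_eq_add_of_le hab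
  simpa [discrepancy_add] using hb.abs_windowCount_sub_le b n

lemma IsBalanced.abs_discrepancy_le (hb : IsBalanced u) (m : ℕ) : |discrepancy u m| ≤ 1 := by
  simpa using hb.abs_discrepancy_sub_le m 0

end Slope

section Irrational

open Finset

variable {u : ℕ → Bool}

lemma sum_range_sub_shift (f : ℕ → ℝ) (q M : ℕ) :
    ∑ m ∈ range M, (f (m + q) - f m) = ∑ k ∈ range q, (f (M + k) - f k) := by
  have h₁ := sum_range_add f q M
  have h₂ := sum_range_add f M q
  have h₃ : ∑ m ∈ range M, f (m + q) = ∑ m ∈ range M, f (q + m) :=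
    sum_congr rfl fun m _ => by rw [Nat.add_comm]
  rw [Nat.add_comm q M] at h₁
  rw [sum_sub_distrib, sum_sub_distrib, h₃]
  linarith

lemma eventuallyPeriodic_of_windowCount_eventually_const (u : ℕ → Bool) {q : ℕ} (hq : 0 < q)
    (h : ∀ᶠ n in atTop, windowCount u (n + 1) q = windowCount u n q) : EventuallyPeriodic u := by
  obtain ⟨N, hN⟩ := eventually_atTop.mp h
  refine ⟨q, hq, N, fun n hn => ?_⟩
  have h₁ := windowCount_add u n 1 q
  have h₂ := windowCount_add u n q 1
  rw [Nat.add_comm 1 q, h₂, hN n hn, windowCount_one, windowCount_one] at h₁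
  have : (u (n + q)).toNat = (u n).toNat := by omega
  cases h₃ : u (n + q) <;> cases h₄ : u n <;> simp_all

lemma IsBalanced.eventually_windowCount_eq (hb : IsBalanced u) {q : ℕ} {p : ℤ}
    (hqp : (q : ℝ) * bFrequency u = p) : ∀ᶠ n in atTop, (windowCount u n q : ℤ) = p := by
  set K := minWindowCount u q
  have hpK : (K : ℤ) ≤ p ∧ p ≤ K + 1 := by
    constructor <;> [have := minWindowCount_le_mul_bFrequency u q; have := hb.mul_bFrequency_le q]
      <;> rw [hqp] at this <;> exact_mod_cast this
  set d : ℕ → ℝ := fun n => windowCount u n q - p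
  have hd (n : ℕ) : d n = discrepancy u (n + q) - discrepancy u n := by
    simp [d, discrepancy_add, hqp]
  -- all the `d n` have the same sign, because `windowCount u n q` and `p` both lie in `{K, K + 1}`
  obtain ⟨σ, hσ, hdσ⟩ : ∃ σ : ℝ, |σ| = 1 ∧ ∀ n, |d n| = σ * d n := by
    have hc (n : ℕ) : K ≤ windowCount u n q ∧ windowCount u n q ≤ K + 1 :=
      ⟨minWindowCount_le u n q, hb.windowCount_le_minWindowCount_add_one n q⟩
    rcases (by omega : p = K ∨ p = K + 1) with hp | hp
    · refine ⟨1, by simp, fun n => ?_⟩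
      rw [one_mul, abs_of_nonneg]
      simp only [d, hp, sub_nonneg]
      exact_mod_cast (hc n).1
    · refine ⟨-1, by simp, fun n => ?_⟩
      rw [neg_one_mul, abs_of_nonpos]
      simp only [d, hp, sub_nonpos]
      exact_mod_cast (hc n).2
  have hsum (M : ℕ) : ∑ n ∈ range M, |d n| ≤ q := by
    calc ∑ n ∈ range M, |d n|
        = σ * ∑ k ∈ range q, (discrepancy u (M + k) - discrepancy u k) := by
          rw [sum_congr rfl fun n _ => hdσ n, ← mul_sum, sum_congr rfl fun n _ => hd n,
            sum_range_sub_shift]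
      _ ≤ ∑ k ∈ range q, |discrepancy u (M + k) - discrepancy u k| := by
          refine (le_abs_self _).trans ?_
          rw [abs_mul, hσ, one_mul]
          exact abs_sum_le_sum_abs _ _
      _ ≤ ∑ k ∈ range q, (1 : ℝ) := sum_le_sum fun k _ => hb.abs_discrepancy_sub_le _ _
      _ = q := by simp
  have hlim := (summable_of_sum_range_le (fun n => abs_nonneg (d n)) hsum).tendsto_atTop_zero
  filter_upwards [hlim.eventually (gt_mem_nhds one_pos)] with n hn
  rw [← sub_eq_zero, ← Int.abs_lt_one_iff]
  exact_mod_cast (show |(windowCount u n q : ℝ) - p| < 1 from hn)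

theorem IsSturmian.irrational_bFrequency (hu : IsSturmian u) : Irrational (bFrequency u) := by
  rintro ⟨r, hr⟩
  have hqp : (r.den : ℝ) * bFrequency u = r.num := by
    rw [← hr, Rat.cast_def]
    field_simp
  have hconst := hu.2.eventually_windowCount_eq hqp
  refine hu.1 (eventuallyPeriodic_of_windowCount_eventually_const u r.den_pos ?_)
  filter_upwards [hconst, (tendsto_add_atTop_nat 1).eventually hconst] with n h₁ h₂
  exact_mod_cast h₂.trans h₁.symm

end Irrational

section Phase

variable {u : ℕ → Bool}

noncomputable def phase (u : ℕ → Bool) (m : ℕ) : ℝ := discrepancy u m - ⨅ n, discrepancy u n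

lemma phase_add (u : ℕ → Bool) (m n : ℕ) :
    phase u (m + n) = phase u m + windowCount u m n - n * bFrequency u := by
  simp only [phase, discrepancy_add]
  ring

lemma phase_succ (u : ℕ → Bool) (m : ℕ) :
    phase u (m + 1) = phase u m + (u m).toNat - bFrequency u := by
  simp [phase_add, windowCount_one]

lemma bCount_eq_phase (u : ℕ → Bool) (t : ℕ) :
    (bCount u t : ℝ) = t * bFrequency u + (⨅ n, discrepancy u n) + phase u t := by
  simp only [phase, discrepancy]
  ring

lemma IsBalanced.bddBelow_discrepancy (hb : IsBalanced u) : BddBelow (Set.range (discrepancy u)) :=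
  ⟨-1, by rintro _ ⟨m, rfl⟩; exact (abs_le.mp (hb.abs_discrepancy_le m)).1⟩

lemma IsBalanced.phase_nonneg (hb : IsBalanced u) (m : ℕ) : 0 ≤ phase u m :=
  sub_nonneg.mpr (ciInf_le hb.bddBelow_discrepancy m)

lemma IsBalanced.phase_le_one (hb : IsBalanced u) (m : ℕ) : phase u m ≤ 1 := by
  have : discrepancy u m - 1 ≤ ⨅ n, discrepancy u n :=
    le_ciInf fun n => by linarith [(abs_le.mp (hb.abs_discrepancy_sub_le m n)).2]
  simp only [phase]
  linarith

lemma phase_injective (hirr : Irrational (bFrequency u)) : Function.Injective (phase u) := by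
  suffices ∀ m n, phase u (m + (n + 1)) ≠ phase u m by
    intro a b hab
    by_contra hne
    rcases Nat.lt_or_gt_of_ne hne with h | h
    · exact this a (b - a - 1) (by rw [show a + (b - a - 1 + 1) = b by omega, hab])
    · exact this b (a - b - 1) (by rw [show b + (a - b - 1 + 1) = a by omega, hab])
  intro m n h
  rw [phase_add] at h
  exact (hirr.natCast_mul n.succ_ne_zero).ne_nat (windowCount u m (n + 1))
    (by push_cast at h ⊢; linarith)

lemma IsBalanced.eq_true_of_phase_lt_bFrequency (hb : IsBalanced u) {m : ℕ}
    (h : phase u m < bFrequency u) : u m = true := by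
  by_contra hm
  have := phase_succ u m
  simp only [Bool.not_eq_true] at hm
  simp [hm] at this
  linarith [hb.phase_nonneg (m + 1)]

lemma IsBalanced.eq_false_of_bFrequency_lt_phase (hb : IsBalanced u) {m : ℕ}
    (h : bFrequency u < phase u m) : u m = false := by
  by_contra hm
  have := phase_succ u m
  simp only [Bool.not_eq_false] at hm
  simp [hm] at this
  linarith [hb.phase_le_one (m + 1)]

lemma IsBalanced.eq_true_of_phase_le_bFrequency (hb : IsBalanced u) (hne : ∀ n, phase u n ≠ 0)
    {m : ℕ} (h : phase u m ≤ bFrequency u) : u m = true := by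
  by_contra hm
  have := phase_succ u m
  simp only [Bool.not_eq_true] at hm
  simp [hm] at this
  exact hne (m + 1) (le_antisymm (by linarith) (hb.phase_nonneg _))

lemma IsBalanced.eq_false_of_bFrequency_le_phase (hb : IsBalanced u) (hne : ∀ n, phase u n ≠ 1)
    {m : ℕ} (h : bFrequency u ≤ phase u m) : u m = false := by
  by_contra hm
  have := phase_succ u m
  simp only [Bool.not_eq_false] at hm
  simp [hm] at this
  exact hne (m + 1) (le_antisymm (hb.phase_le_one _) (by linarith))

lemma IsSturmian.bFrequency_mem_Ioo (hu : IsSturmian u) : bFrequency u ∈ Set.Ioo 0 1 :=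
  ⟨(bFrequency_nonneg u).lt_of_ne' hu.irrational_bFrequency.ne_zero,
    (bFrequency_le_one u).lt_of_ne hu.irrational_bFrequency.ne_one⟩

end Phase

section Cylinder

open Set

variable {u : ℕ → Bool}

/-- Both values are followed by the phase `1 - α`, so by injectivity they cannot both occur. -/
lemma IsSturmian.phase_ne_one_or_phase_ne_zero (hu : IsSturmian u) :
    (∀ n, phase u n ≠ 1) ∨ (∀ n, phase u n ≠ 0) := by
  have hα := hu.bFrequency_mem_Ioo
  by_contra! ⟨⟨m₁, h₁⟩, ⟨m₀, h₀⟩⟩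
  have e₀ := phase_succ u m₀
  have e₁ := phase_succ u m₁
  rw [hu.2.eq_true_of_phase_lt_bFrequency (h₀ ▸ hα.1), h₀] at e₀
  rw [hu.2.eq_false_of_bFrequency_lt_phase (h₁ ▸ hα.2), h₁] at e₁
  have := phase_injective hu.irrational_bFrequency (show phase u (m₀ + 1) = phase u (m₁ + 1) by
    rw [e₀, e₁]; simp)
  rw [Nat.succ_injective this, h₁] at h₀
  exact one_ne_zero h₀

/-- Perturbing every phase in the same direction, away from the endpoint that never occurs,
preserves the letters. -/
lemma IsSturmian.exists_oneSided_nhds_letter_stable (hu : IsSturmian u) :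
    ∃ l : Filter ℝ, (l = 𝓝[>] 0 ∨ l = 𝓝[<] 0) ∧ ∀ m, ∀ᶠ d in l,
      phase u m + d ∈ Ioo 0 1 ∧ ∀ t, phase u t = phase u m + d → u t = u m := by
  have hb := hu.2
  have hα := hu.bFrequency_mem_Ioo
  have h₀ := hb.phase_nonneg
  have h₁ := hb.phase_le_one
  rcases hu.phase_ne_one_or_phase_ne_zero with hne | hne
  · refine ⟨𝓝[>] 0, Or.inl rfl, fun m => ?_⟩
    have hm := (h₁ m).lt_of_ne (hne m)
    rcases lt_or_ge (phase u m) (bFrequency u) with hlt | hge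
    · filter_upwards [self_mem_nhdsWithin, nhdsWithin_le_nhds (eventually_lt_nhds (sub_pos.2 hlt))]
        with d (hd : 0 < d) hdα
      refine ⟨⟨by linarith [h₀ m], by linarith [hα.2]⟩, fun t ht => ?_⟩
      rw [hb.eq_true_of_phase_lt_bFrequency hlt, hb.eq_true_of_phase_lt_bFrequency (by linarith)]
    · filter_upwards [self_mem_nhdsWithin, nhdsWithin_le_nhds (eventually_lt_nhds (sub_pos.2 hm))]
        with d (hd : 0 < d) hd1
      refine ⟨⟨by linarith [h₀ m], by linarith⟩, fun t ht => ?_⟩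
      rw [hb.eq_false_of_bFrequency_le_phase hne hge,
        hb.eq_false_of_bFrequency_lt_phase (by linarith)]
  · refine ⟨𝓝[<] 0, Or.inr rfl, fun m => ?_⟩
    have hm := (h₀ m).lt_of_ne' (hne m)
    rcases le_or_gt (phase u m) (bFrequency u) with hle | hgt
    · filter_upwards [self_mem_nhdsWithin,
        nhdsWithin_le_nhds (eventually_gt_nhds (neg_lt_zero.2 hm))]
        with d (hd : d < 0) hd0
      refine ⟨⟨by linarith, by linarith [h₁ m]⟩, fun t ht => ?_⟩
      rw [hb.eq_true_of_phase_le_bFrequency hne hle,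
        hb.eq_true_of_phase_lt_bFrequency (by linarith)]
    · filter_upwards [self_mem_nhdsWithin,
        nhdsWithin_le_nhds (eventually_gt_nhds (neg_lt_zero.2 (sub_pos.2 hgt)))]
        with d (hd : d < 0) hdα
      refine ⟨⟨by linarith [hα.1], by linarith [h₁ m]⟩, fun t ht => ?_⟩
      rw [hb.eq_false_of_bFrequency_lt_phase hgt, hb.eq_false_of_bFrequency_lt_phase (by linarith)]

lemma exists_Ioo_subset_of_mem_nhdsGT_or_nhdsLT {l : Filter ℝ} (hl : l = 𝓝[>] 0 ∨ l = 𝓝[<] 0)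
    {s : Set ℝ} (hs : s ∈ l) : ∃ c₁ c₂, c₁ < c₂ ∧ Ioo c₁ c₂ ⊆ s := by
  rcases hl with rfl | rfl
  · obtain ⟨c, hc, hsub⟩ := mem_nhdsGT_iff_exists_Ioo_subset.mp hs
    exact ⟨0, c, hc, hsub⟩
  · obtain ⟨c, hc, hsub⟩ := mem_nhdsLT_iff_exists_Ioo_subset.mp hs
    exact ⟨c, 0, hc, hsub⟩

lemma occursAt_of_phase_eq {w : List Bool} {i t : ℕ} {d : ℝ} (hi : OccursAt u w i)
    (hd : ∀ n < w.length, ∀ s, phase u s = phase u (i + n) + d → u s = u (i + n))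
    (ht : phase u t = phase u i + d) : OccursAt u w t := by
  have key (n : ℕ) (hn : n ≤ w.length) : phase u (t + n) = phase u (i + n) + d := by
    induction n with
    | zero => exact ht
    | succ n ih =>
      have ih := ih (by omega)
      rw [← Nat.add_assoc, ← Nat.add_assoc, phase_succ, phase_succ, ih, hd n (by omega) _ ih]
      ring
  rw [occursAt_iff] at hi ⊢
  intro k hk
  rw [hi k hk, hd k hk _ (key k hk.le)]

lemma IsSturmian.exists_Ioo_phase_occursAt (hu : IsSturmian u) {w : List Bool} (hw : IsFactor u w) :
    ∃ a b, a < b ∧ Ioo a b ⊆ Ioo 0 1 ∧ ∀ t, phase u t ∈ Ioo a b → OccursAt u w t := by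
  obtain ⟨i, hi⟩ := hw
  obtain ⟨l, hl, hside⟩ := hu.exists_oneSided_nhds_letter_stable
  have hev : ∀ᶠ d in l, phase u i + d ∈ Ioo 0 1 ∧
      ∀ n ∈ Iio w.length, ∀ s, phase u s = phase u (i + n) + d → u s = u (i + n) :=
    ((hside i).and ((Filter.eventually_all_finite (finite_Iio _)).mpr
      fun n _ => (hside (i + n)).mono fun _ h => h.2)).mono fun _ h => ⟨h.1.1, h.2⟩
  obtain ⟨c₁, c₂, hc, hsub⟩ := exists_Ioo_subset_of_mem_nhdsGT_or_nhdsLT hl hev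
  have hmem {y : ℝ} (hy : y ∈ Ioo (phase u i + c₁) (phase u i + c₂)) :=
    @hsub (y - phase u i) ⟨by linarith [hy.1], by linarith [hy.2]⟩
  refine ⟨phase u i + c₁, phase u i + c₂, by linarith, fun y hy => ?_, fun t ht => ?_⟩
  · simpa using (hmem hy).1
  · exact occursAt_of_phase_eq hi (hmem ht).2 (by ring)

end Cylinder

section Rotation

open Set

lemma exists_nat_mul_add_int_mem_Ioo_of_pos {δ a b : ℝ} (hδ : 0 < δ) (hab : δ < b - a) (x : ℝ) :
    ∃ m : ℕ, ∃ z : ℤ, x + m * δ + z ∈ Ioo a b := by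
  set e := a - x - ⌊a - x⌋
  have he : 0 ≤ e := Int.fract_nonneg (a - x)
  refine ⟨⌊e / δ⌋₊ + 1, ⌊a - x⌋, ?_, ?_⟩
  · have := Nat.lt_floor_add_one (e / δ)
    rw [div_lt_iff₀ hδ] at this
    push_cast
    linarith
  · have := Nat.floor_le (div_nonneg he hδ.le)
    rw [le_div_iff₀ hδ] at this
    push_cast
    linarith

lemma exists_nat_mul_add_int_mem_Ioo_of_ne_zero {δ a b : ℝ} (hδ : δ ≠ 0) (hab : |δ| < b - a)
    (x : ℝ) :
    ∃ m : ℕ, ∃ z : ℤ, x + m * δ + z ∈ Ioo a b := by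
  rcases hδ.lt_or_gt with hneg | hpos
  · obtain ⟨m, z, h₁, h₂⟩ := exists_nat_mul_add_int_mem_Ioo_of_pos (neg_pos.2 hneg)
      (show -δ < -a - -b by rw [abs_of_neg hneg] at hab; linarith) (-x)
    exact ⟨m, -z, by push_cast; linarith, by push_cast; linarith⟩
  · exact exists_nat_mul_add_int_mem_Ioo_of_pos hpos (by rwa [abs_of_pos hpos] at hab) x

lemma Irrational.exists_nat_mul_add_int_mem_Ioo {γ : ℝ} (hγ : Irrational γ) (x : ℝ) {a b : ℝ}
    (hab : a < b) (S : ℕ) : ∃ s, S ≤ s ∧ ∃ z : ℤ, x + s * γ + z ∈ Ioo a b := by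
  obtain ⟨N, hN⟩ := exists_nat_one_div_lt (sub_pos.2 hab)
  obtain ⟨k, hk, -, hkγ⟩ := Real.exists_nat_abs_mul_sub_round_le γ N.succ_pos
  have hδ : k * γ - round (k * γ) ≠ 0 :=
    sub_ne_zero.2 ((hγ.natCast_mul hk.ne').ne_int _)
  have hsmall : |k * γ - round (k * γ)| < b - a :=
    hkγ.trans_lt (lt_of_le_of_lt (by gcongr; simp) hN)
  obtain ⟨m, z, hz⟩ := exists_nat_mul_add_int_mem_Ioo_of_ne_zero hδ hsmall (x + S * γ)
  refine ⟨S + m * k, by omega, z - m * round (k * γ), ?_⟩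
  convert hz using 1
  push_cast
  ring

end Rotation

section Occurrences

open Set

variable {u : ℕ → Bool}

lemma IsSturmian.eventually_le_aCount_and_le_bCount (hu : IsSturmian u) (i j : ℕ) :
    ∀ᶠ t in atTop, i ≤ aCount u t ∧ j ≤ bCount u t := by
  obtain ⟨hα₀, hα₁⟩ := hu.bFrequency_mem_Ioo
  have hlin {r : ℝ} (hr : 0 < r) (c : ℕ) : ∀ᶠ t : ℕ in atTop, (c : ℝ) ≤ t * r - 1 :=
    (tendsto_atTop_add_const_right _ (-1)
      (tendsto_natCast_atTop_atTop.atTop_mul_const hr)).eventually_ge_atTop _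
  filter_upwards [hlin (sub_pos.2 hα₁) i, hlin hα₀ j] with t hi hj
  have hd := abs_le.mp (hu.2.abs_discrepancy_le t)
  have hab : (aCount u t : ℝ) + bCount u t = t := by exact_mod_cast aCount_add_bCount u t
  simp only [discrepancy] at hd
  constructor <;> [exact_mod_cast (by linarith : (i : ℝ) ≤ aCount u t);
    exact_mod_cast (by linarith : (j : ℝ) ≤ bCount u t)]

lemma IsBalanced.bCount_eq_of_sub_mem_Ioo (hb : IsBalanced u) {t : ℕ} {z : ℤ}
    (hz : z - t * bFrequency u - ⨅ n, discrepancy u n ∈ Ioo 0 1) : (bCount u t : ℤ) = z := by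
  have h₀ := hb.phase_nonneg t
  have h₁ := hb.phase_le_one t
  have : |((bCount u t - z : ℤ) : ℝ)| < 1 := by
    rw [abs_lt]; push_cast; rw [bCount_eq_phase]; constructor <;> linarith [hz.1, hz.2]
  rw [← Int.cast_abs, ← Int.cast_one, Int.cast_lt, Int.abs_lt_one_iff] at this
  linarith

lemma IsSturmian.exists_occursAt_aCount_bCount (hu : IsSturmian u) {w : List Bool}
    (hw : IsFactor u w) (i j : ℕ) {Q : ℕ} (hQ : 0 < Q) :
    ∃ t k k', OccursAt u w t ∧ aCount u t = i + Q * k ∧ bCount u t = j + Q * k' := by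
  obtain ⟨a, b, hab, hsub, hocc⟩ := hu.exists_Ioo_phase_occursAt hw
  obtain ⟨S, hS⟩ := eventually_atTop.mp (hu.eventually_le_aCount_and_le_bCount i j)
  have hQ' : (0 : ℝ) < Q := by exact_mod_cast hQ
  set ι := ⨅ n, discrepancy u n
  set α := bFrequency u
  obtain ⟨s, hsS, z, hz⟩ := Irrational.exists_nat_mul_add_int_mem_Ioo
    hu.irrational_bFrequency.neg ((j - ι - (i + j) * α) / Q) (div_lt_div_of_pos_right hab hQ') S
  set t := i + j + Q * s
  -- the target value of `phase u t`, which forces `bCount u t = j + Q * z`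
  have hy : ((j + Q * z : ℤ) : ℝ) - t * α - ι ∈ Ioo a b := by
    have : ((j + Q * z : ℤ) : ℝ) - t * α - ι = Q * ((j - ι - (i + j) * α) / Q + s * -α + z) := by
      simp only [t]; field_simp; push_cast; ring
    rw [this]
    exact ⟨(div_lt_iff₀' hQ').mp hz.1, (lt_div_iff₀' hQ').mp hz.2⟩
  have hB := hu.2.bCount_eq_of_sub_mem_Ioo (hsub hy)
  have hphase : phase u t ∈ Ioo a b := by
    convert hy using 1
    linarith [bCount_eq_phase u t, show (bCount u t : ℝ) = ((j + Q * z : ℤ) : ℝ) by simp [← hB]]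
  obtain ⟨hi, hj⟩ := hS t (by have := Nat.le_mul_of_pos_left s hQ; omega)
  lift z to ℕ using by nlinarith
  have hzs : z ≤ s := Nat.le_of_mul_le_mul_left (by have := aCount_add_bCount u t; omega) hQ
  refine ⟨t, s - z, z, hocc t hphase, ?_, by exact_mod_cast hB⟩
  have := aCount_add_bCount u t
  have := Nat.mul_le_mul_left Q hzs
  rw [Nat.mul_sub]
  omega

end Occurrences

section Colouring

variable {A : Type*}

lemma IsConstantGap.exists_period_at {y : ℕ → A} (hy : IsConstantGap y) (m : ℕ) :
    ∃ g, 0 < g ∧ ∀ k, y (m + g * k) = y m := by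
  obtain ⟨g, hg, hgap⟩ := hy (y m) ⟨m, rfl⟩
  refine ⟨g, hg, fun k => ?_⟩
  induction k with
  | zero => rfl
  | succ k ih => rw [Nat.mul_succ, ← Nat.add_assoc, (hgap _ ih).1]

lemma IsConstantGap.exists_period_on {y : ℕ → A} (hy : IsConstantGap y) (i L : ℕ) :
    ∃ P, 0 < P ∧ ∀ k, ∀ n < L, y (n + (i + P * k)) = y (n + i) := by
  choose g hg hper using fun n => hy.exists_period_at (n + i)
  refine ⟨∏ n ∈ Finset.range L, g n, Finset.prod_pos fun n _ => hg n, fun k n hn => ?_⟩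
  obtain ⟨c, hc⟩ := Finset.dvd_prod_of_mem g (Finset.mem_range.mpr hn)
  rw [hc, ← Nat.add_assoc, Nat.mul_assoc, hper]

@[simp] lemma length_colourWord (y y' : ℕ → A) (w : List Bool) :
    (colourWord y y' w).length = w.length := by
  induction w generalizing y y' with
  | nil => rfl
  | cons c w ih => cases c <;> simp [colourWord, ih]

lemma colourWord_congr {y₁ y₂ y₁' y₂' : ℕ → A} {w : List Bool}
    (h : ∀ n < w.length, y₁ n = y₂ n) (h' : ∀ n < w.length, y₁' n = y₂' n) :
    colourWord y₁ y₁' w = colourWord y₂ y₂' w := by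
  induction w generalizing y₁ y₂ y₁' y₂' with
  | nil => rfl
  | cons c w ih =>
    simp only [List.length_cons] at h h'
    cases c
    · simp only [colourWord, Bool.false_eq_true, ite_false, h 0 (by omega)]
      exact congrArg _ (ih (fun n hn => h _ (by omega)) (fun n hn => h' _ (by omega)))
    · simp only [colourWord, ite_true, h' 0 (by omega)]
      exact congrArg _ (ih (fun n hn => h _ (by omega)) (fun n hn => h' _ (by omega)))

lemma colour_apply (u : ℕ → Bool) (y y' : ℕ → A) (t : ℕ) :
    colour u y y' t = if u t then y' (bCount u t) else y (aCount u t) := rfl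

lemma factorAt_colour (u : ℕ → Bool) (y y' : ℕ → A) (t L : ℕ) :
    factorAt (colour u y y') t L =
      colourWord (fun n => y (n + aCount u t)) (fun n => y' (n + bCount u t)) (factorAt u t L) := by
  induction L generalizing t with
  | zero => rfl
  | succ L ih =>
    rw [factorAt_succ, factorAt_succ, ih]
    cases h : u t <;> simp [colourWord, colour_apply, h, aCount_succ, bCount_succ, Nat.add_assoc,
      Nat.add_comm 1]

end Colouring

section Language

variable {A : Type*}

lemma HasPowerFactor.mono {v v₂ : ℕ → A} (h : ∀ x, IsFactor v x → IsFactor v₂ x) {w : List A}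
    {n : ℕ} (hp : HasPowerFactor v w n) : HasPowerFactor v₂ w n := by
  obtain ⟨hne, i, hi⟩ := hp
  obtain ⟨i₂, hi₂⟩ := h _ ⟨i, occursAt_factorAt v i n⟩
  have hmod (k : ℕ) : k % w.length < w.length := Nat.mod_lt _ (List.length_pos_iff.mpr hne)
  refine ⟨hne, i₂, fun k hk => ?_⟩
  have := occursAt_iff.mp hi₂ k (by simpa using hk)
  simp only [factorAt, List.getElem_map, List.getElem_range, hi k hk,
    List.getD_eq_getElem _ _ (hmod k)] at this
  rw [← this, List.getD_eq_getElem _ _ (hmod k)]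

lemma hasPowerFactor_eq_of_isFactor_iff {v v₂ : ℕ → A} (h : ∀ x, IsFactor v x ↔ IsFactor v₂ x) :
    HasPowerFactor v = HasPowerFactor v₂ :=
  funext₂ fun _ _ => propext ⟨.mono fun x => (h x).1, .mono fun x => (h x).2⟩

lemma critExp_congr {v v₂ : ℕ → A} (h : ∀ x, IsFactor v x ↔ IsFactor v₂ x) :
    critExp v = critExp v₂ := by
  simp only [critExp, hasPowerFactor_eq_of_isFactor_iff h]

lemma acritExp_congr {v v₂ : ℕ → A} (h : ∀ x, IsFactor v x ↔ IsFactor v₂ x) :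
    acritExp v = acritExp v₂ := by
  simp only [acritExp, maxExpLen, critExp_congr h, hasPowerFactor_eq_of_isFactor_iff h]

end Language

section Sturmian

variable {A : Type*} {u : ℕ → Bool} {y y' : ℕ → A}

theorem IsSturmian.isFactor_colour_colourWord (hu : IsSturmian u) (hy : IsConstantGap y)
    (hy' : IsConstantGap y') {w : List Bool} (hw : IsFactor u w) (i j : ℕ) :
    IsFactor (colour u y y') (colourWord (fun n => y (n + i)) (fun n => y' (n + j)) w) := by
  obtain ⟨P, hP, hPy⟩ := hy.exists_period_on i w.length
  obtain ⟨P', hP', hPy'⟩ := hy'.exists_period_on j w.length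
  obtain ⟨t, k, k', hocc, hA, hB⟩ := hu.exists_occursAt_aCount_bCount hw i j (Nat.mul_pos hP hP')
  refine ⟨t, ?_⟩
  rw [OccursAt, length_colourWord, factorAt_colour, ← hocc, hA, hB]
  refine colourWord_congr (fun n hn => ?_) (fun n hn => ?_)
  · rw [Nat.mul_assoc, hPy _ n hn]
  · rw [Nat.mul_comm P, Nat.mul_assoc, hPy' _ n hn]

theorem IsSturmian.isFactor_colour_of_isFactor_colour (hu : IsSturmian u) (hy : IsConstantGap y)
    (hy' : IsConstantGap y') {u₂ : ℕ → Bool} (hsub : ∀ x, IsFactor u₂ x → IsFactor u x)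
    {x : List A} (hx : IsFactor (colour u₂ y y') x) : IsFactor (colour u y y') x := by
  obtain ⟨t, ht⟩ := hx
  rw [ht, factorAt_colour]
  exact hu.isFactor_colour_colourWord hy hy' (hsub _ ⟨t, occursAt_factorAt u₂ t _⟩) _ _

end Sturmian

theorem colour_shifted_factor_and_invariance_general
    {A : Type*} (u : ℕ → Bool) (y y' : ℕ → A)
    (hu : IsSturmian u)
    (hy : IsConstantGap y) (hy' : IsConstantGap y')
    (w : List Bool) (hw : IsFactor u w) :
    (∀ i j : ℕ,
      IsFactor (colour u y y')
        (colourWord (fun n => y (n + i)) (fun n => y' (n + j)) w)) ∧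
    (∀ u₂ : ℕ → Bool, IsSturmian u₂ → (∀ x, IsFactor u₂ x ↔ IsFactor u x) →
      critExp (colour u₂ y y') = critExp (colour u y y') ∧
      acritExp (colour u₂ y y') = acritExp (colour u y y')) := by
  refine ⟨hu.isFactor_colour_colourWord hy hy' hw, fun u₂ hu₂ hlang => ?_⟩
  have hcol (x : List A) : IsFactor (colour u₂ y y') x ↔ IsFactor (colour u y y') x :=
    ⟨hu.isFactor_colour_of_isFactor_colour hy hy' fun z => (hlang z).1,
      hu₂.isFactor_colour_of_isFactor_colour hy hy' fun z => (hlang z).2⟩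
  exact ⟨critExp_congr hcol, acritExp_congr hcol⟩

/-- Let `v = colour(u, y, y')` with `u` Sturmian and `y`, `y'`
constant gap sequences over disjoint alphabets, and let `w` be a factor of `u`.
Then for all `i, j`, the word obtained by colouring `w` with the shifted
sequences `σ^i(y)` and `σ^j(y')` is a factor of `v`. In particular, any
Sturmian sequence `u₂` with the same language as `u` satisfies
`E(colour(u₂, y, y')) = E(v)` and `E*(colour(u₂, y, y')) = E*(v)`. -/
theorem colour_shifted_factor_and_invariance
    {A : Type*} (u : ℕ → Bool) (y y' : ℕ → A)
    (hu : IsSturmian u)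
    (hy : IsConstantGap y) (hy' : IsConstantGap y')
    (hdisj : ∀ m n, y m ≠ y' n)
    (w : List Bool) (hw : IsFactor u w) :
    (∀ i j : ℕ,
      IsFactor (colour u y y')
        (colourWord (fun n => y (n + i)) (fun n => y' (n + j)) w)) ∧
    (∀ u₂ : ℕ → Bool, IsSturmian u₂ → (∀ x, IsFactor u₂ x ↔ IsFactor u x) →
      critExp (colour u₂ y y') = critExp (colour u y y') ∧
      acritExp (colour u₂ y y') = acritExp (colour u y y')) :=
  colour_shifted_factor_and_invariance_general u y y' hu hy hy' w hw

end Paper
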